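/- In the quantum Bruhat graph of a finite Weyl group W, for every element w ∈ W and every positive root α, one has |ℓ(w) − ℓ(w r_α)| ≤ ⟨α^∨, 2ρ⟩ − 1; in particular the length of a reflection satisfies ℓ(r_α) ≤ ⟨α^∨, 2ρ⟩ − 1. -/

import Mathlib

noncomputable section

open scoped Classical
open scoped RealInnerProductSpace
open Finset

variable {V : Type*} [NormedAddCommGroup V] [InnerProductSpace ℝ V] [FiniteDimensional ℝ V]

/-- A (reduced, crystallographic) root system in a Euclidean space, with a fixed
choice of positive roots `Rpos` and simple roots `Δ`. -/
structure IsRootSystem (R Rpos Δ : Finset V) : Prop where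
  nonzero : ∀ α ∈ R, α ≠ (0 : V)
  reduced : ∀ α ∈ R, ∀ c : ℝ, c • α ∈ R → c = 1 ∨ c = -1
  crystallographic : ∀ α ∈ R, ∀ β ∈ R, ∃ n : ℤ, 2 * ⟪β, α⟫ / ⟪α, α⟫ = (n : ℝ)
  reflect_mem : ∀ α ∈ R, ∀ β ∈ R, β - (2 * ⟪β, α⟫ / ⟪α, α⟫) • α ∈ R
  pos_subset : Rpos ⊆ R
  pos_or_neg : ∀ α ∈ R, α ∈ Rpos ∨ -α ∈ Rpos
  not_both : ∀ α ∈ Rpos, -α ∉ Rpos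
  simple_subset : Δ ⊆ Rpos
  simple_nonneg_comb : ∀ α ∈ Rpos, ∃ c : V → ℝ, (∀ β ∈ Δ, 0 ≤ c β) ∧ α = ∑ β ∈ Δ, c β • β
  simple_indep : LinearIndependent ℝ (fun β : (Δ : Set V) => (β : V))

/-- The coroot `α^∨ = 2α/(α,α)` of a root `α`, in the Euclidean identification. -/
def coroot (α : V) : V := (2 / ⟪α, α⟫) • α

/-- The half-sum `ρ` of the positive roots. -/
def rho (Rpos : Finset V) : V := (2 : ℝ)⁻¹ • ∑ α ∈ Rpos, α

/-- The reflection `r_α` across the hyperplane orthogonal to `α`. -/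
def sref (α : V) : V ≃ₗᵢ[ℝ] V := Submodule.reflection (ℝ ∙ α)ᗮ

/-- The Weyl group: the subgroup of isometries generated by the reflections in the roots. -/
def weylGroup (R : Finset V) : Subgroup (V ≃ₗᵢ[ℝ] V) :=
  Subgroup.closure { g | ∃ α ∈ R, g = sref α }

/-- The length of a Weyl group element: the number of positive roots it sends negative. -/
def lenW (Rpos : Finset V) (w : V ≃ₗᵢ[ℝ] V) : ℕ :=
  (Rpos.filter (fun α => w α ∉ Rpos)).card

/-- Dominance: nonnegative pairing against every positive root. -/
def isDominant (Rpos : Finset V) (lam : V) : Prop := ∀ α ∈ Rpos, 0 ≤ ⟪lam, α⟫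

/-- Dominance order: `μ ≤ lam` iff `lam - μ` is a nonnegative rational combination of the
coroots of the roots in `S`. -/
def domLE (S : Finset V) (μ lam : V) : Prop :=
  ∃ c : V → ℚ, (∀ β ∈ S, 0 ≤ c β) ∧ lam - μ = ∑ β ∈ S, (c β : ℝ) • coroot β

/-- The coroot lattice `Q^∨`. -/
def corootLattice (R : Finset V) : Submodule ℤ V := Submodule.span ℤ (coroot '' (R : Set V))

/-! ### Auxiliary lemmas -/

lemma sref_apply' (α : V) (v : V) : sref α v = v - (2 * ⟪v, α⟫ / ⟪α, α⟫) • α := by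
  rw [sref, Submodule.reflection_apply, Submodule.starProjection_orthogonal_val,
    Submodule.starProjection_singleton]
  rw [real_inner_comm v α, real_inner_self_eq_norm_sq]
  push_cast
  simp only [RCLike.ofReal_real_eq_id, id_eq]
  rw [two_smul]
  module

lemma sref_sref (α v : V) : sref α (sref α v) = v := Submodule.reflection_reflection _ v

section RS

variable {R Rpos Δ : Finset V} (h : IsRootSystem R Rpos Δ)

include h

lemma rs_inner_self_ne {α : V} (hα : α ∈ R) : ⟪α, α⟫ ≠ 0 := by
  simpa [real_inner_self_eq_norm_sq, pow_eq_zero_iff] using h.nonzero α hα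

lemma rs_sref_mem {α β : V} (hα : α ∈ R) (hβ : β ∈ R) : sref α β ∈ R := by
  rw [sref_apply']; exact h.reflect_mem α hα β hβ

lemma rs_weyl_mem_root {w : V ≃ₗᵢ[ℝ] V} (hw : w ∈ weylGroup R) :
    ∀ β ∈ R, w β ∈ R := by
  induction hw using Subgroup.closure_induction with
  | mem g hg =>
    obtain ⟨a, ha, rfl⟩ := hg
    exact fun β hβ => rs_sref_mem h ha hβ
  | one => intro β hβ; simpa using hβ
  | mul x y hx hy ihx ihy => exact fun β hβ => ihx _ (ihy _ hβ)
  | inv x hx ihx =>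
    intro β hβ
    have himg : R.image x = R := by
      apply Finset.eq_of_subset_of_card_le
      · intro b hb
        obtain ⟨a, ha, rfl⟩ := Finset.mem_image.1 hb
        exact ihx a ha
      · rw [Finset.card_image_of_injective _ x.injective]
    rw [← himg] at hβ
    obtain ⟨γ, hγ, rfl⟩ := Finset.mem_image.1 hβ
    have : x⁻¹ (x γ) = γ := x.symm_apply_apply γ
    rwa [this]

/-- Linear independence of simple roots, Finset form. -/
lemma rs_simple_zero (e : V → ℝ) (he : ∑ β ∈ Δ, e β • β = 0) : ∀ β ∈ Δ, e β = 0 := by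
  have hind := h.simple_indep
  rw [Fintype.linearIndependent_iff] at hind
  intro β hβ
  exact hind (fun i => e i) (by rwa [Finset.sum_finset_coe (fun β => e β • β) Δ]) ⟨β, hβ⟩

/-- Exactly one of `x, -x` is positive, for a root `x`. -/
lemma rs_pos_iff_neg_not {x : V} (hx : x ∈ R) : x ∉ Rpos ↔ -x ∈ Rpos := by
  constructor
  · intro hnot
    rcases h.pos_or_neg x hx with h1 | h1
    · exact absurd h1 hnot
    · exact h1
  · intro hneg hpos
    exact h.not_both x hpos hneg

/-- If `β` is positive and its pairing with positive `α` is nonpositive, then the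
reflected root `β - kα` is again positive. -/
lemma rs_reflect_pos_of_nonpos {α β : V} (hα : α ∈ Rpos) (hβ : β ∈ Rpos)
    (hk : 2 * ⟪β, α⟫ / ⟪α, α⟫ ≤ 0) : β - (2 * ⟪β, α⟫ / ⟪α, α⟫) • α ∈ Rpos := by
  set k : ℝ := 2 * ⟪β, α⟫ / ⟪α, α⟫ with hkdef
  have hαR := h.pos_subset hα
  have hβR := h.pos_subset hβ
  have hγR : β - k • α ∈ R := h.reflect_mem α hαR β hβR
  by_contra hγ
  have hneg : -(β - k • α) ∈ Rpos := (rs_pos_iff_neg_not h hγR).1 hγ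
  obtain ⟨c, hc, hcsum⟩ := h.simple_nonneg_comb β hβ
  obtain ⟨ca, hca, hcasum⟩ := h.simple_nonneg_comb α hα
  obtain ⟨d, hd, hdsum⟩ := h.simple_nonneg_comb _ hneg
  have key : ∑ x ∈ Δ, (c x + (-k) * ca x + d x) • x = 0 := by
    have : ∑ x ∈ Δ, (c x + (-k) * ca x + d x) • x
        = (∑ x ∈ Δ, c x • x) + (-k) • (∑ x ∈ Δ, ca x • x) + (∑ x ∈ Δ, d x • x) := by
      rw [Finset.smul_sum, ← Finset.sum_add_distrib, ← Finset.sum_add_distrib]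
      congr 1; ext x; rw [add_smul, add_smul, smul_smul]
    rw [this, ← hcsum, ← hcasum, ← hdsum]
    module
  have hzero := rs_simple_zero h _ key
  have hd0 : ∀ x ∈ Δ, d x = 0 := by
    intro x hx
    have h1 : 0 ≤ c x := hc x hx
    have h2 : 0 ≤ (-k) * ca x := mul_nonneg (by linarith) (hca x hx)
    have h3 : 0 ≤ d x := hd x hx
    have := hzero x hx
    linarith
  have : -(β - k • α) = 0 := by
    rw [hdsum]
    exact Finset.sum_eq_zero fun x hx => by rw [hd0 x hx, zero_smul]
  exact h.nonzero _ hγR (neg_eq_zero.1 this)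

/-- For an inversion `β` of `r_α`, the pairing `⟨α^∨, β⟩` is at least 1. -/
lemma rs_one_le_pairing {α β : V} (hα : α ∈ Rpos) (hβ : β ∈ Rpos)
    (hinv : sref α β ∉ Rpos) : 1 ≤ 2 * ⟪β, α⟫ / ⟪α, α⟫ := by
  obtain ⟨n, hn⟩ := h.crystallographic α (h.pos_subset hα) β (h.pos_subset hβ)
  have hpos : 0 < 2 * ⟪β, α⟫ / ⟪α, α⟫ := by
    by_contra hle
    push_neg at hle
    exact hinv (by rw [sref_apply']; exact rs_reflect_pos_of_nonpos h hα hβ hle)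
  rw [hn] at hpos ⊢
  exact_mod_cast Int.cast_pos.1 hpos

lemma rs_pairing_sref {α β : V} (hα : α ∈ R) :
    2 * ⟪sref α β, α⟫ / ⟪α, α⟫ = -(2 * ⟪β, α⟫ / ⟪α, α⟫) := by
  have hne := rs_inner_self_ne h hα
  rw [sref_apply', inner_sub_left, real_inner_smul_left]
  field_simp
  ring

lemma rs_sref_self {α : V} (hα : α ∈ R) : sref α α = -α := by
  have hne := rs_inner_self_ne h hα
  rw [sref_apply']
  rw [mul_div_assoc, div_self hne]
  module

end RS

theorem stmt_14 (R Rpos Δ : Finset V) (h : IsRootSystem R Rpos Δ)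
    (w : V ≃ₗᵢ[ℝ] V) (hw : w ∈ weylGroup R) (α : V) (hα : α ∈ Rpos) :
    |(lenW Rpos w : ℝ) - (lenW Rpos (w * sref α) : ℝ)|
        ≤ ⟪coroot α, (2 : ℝ) • rho Rpos⟫ - 1 ∧
      (lenW Rpos (sref α) : ℝ) ≤ ⟪coroot α, (2 : ℝ) • rho Rpos⟫ - 1 := by
  have hαR : α ∈ R := h.pos_subset hα
  have hne : ⟪α, α⟫ ≠ 0 := rs_inner_self_ne h hαR
  set k : V → ℝ := fun β => 2 * ⟪β, α⟫ / ⟪α, α⟫ with hk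
  set N : Finset V := Rpos.filter (fun β => sref α β ∉ Rpos) with hN
  set M : Finset V := Rpos.filter (fun β => sref α β ∈ Rpos) with hM
  -- α ∈ N
  have hαN : α ∈ N := by
    rw [hN, Finset.mem_filter]
    exact ⟨hα, by rw [rs_sref_self h hαR]; exact h.not_both α hα⟩
  have hkα : k α = 2 := by rw [hk]; field_simp
  -- each β ∈ N has k β ≥ 1
  have hk1 : ∀ β ∈ N, 1 ≤ k β := by
    intro β hβ
    rw [hN, Finset.mem_filter] at hβ
    exact rs_one_le_pairing h hα hβ.1 hβ.2
  -- the pairing with 2ρ is the sum of k over positive roots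
  have hpair : ⟪coroot α, (2 : ℝ) • rho Rpos⟫ = ∑ β ∈ Rpos, k β := by
    rw [coroot, rho, smul_smul]
    norm_num
    rw [real_inner_smul_left, inner_sum, Finset.mul_sum]
    apply Finset.sum_congr rfl
    intro β _
    show 2 / ‖α‖ ^ 2 * ⟪α, β⟫ = 2 * ⟪β, α⟫ / ⟪α, α⟫
    rw [real_inner_comm α β, real_inner_self_eq_norm_sq]
    ring
  -- sum over M vanishes
  have hMsum : ∑ β ∈ M, k β = 0 := by
    apply Finset.sum_involution (g := fun β _ => sref α β)
    · intro a ha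
      show 2 * ⟪a, α⟫ / ⟪α, α⟫ + 2 * ⟪sref α a, α⟫ / ⟪α, α⟫ = 0
      rw [rs_pairing_sref h hαR]; ring
    · intro a ha hka
      intro heq
      have : k (sref α a) = - k a := rs_pairing_sref h hαR
      rw [heq] at this
      have : k a = 0 := by linarith
      exact hka this
    · intro a ha
      rw [hM, Finset.mem_filter] at ha ⊢
      exact ⟨ha.2, by rw [sref_sref]; exact ha.1⟩
    · intro a ha
      exact sref_sref α a
  -- Rpos splits into N and M
  have hsplit : ∀ f : V → ℝ, ∑ β ∈ Rpos, f β = ∑ β ∈ N, f β + ∑ β ∈ M, f β := by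
    intro f
    rw [hN, hM, ← Finset.sum_filter_add_sum_filter_not Rpos (fun β => sref α β ∉ Rpos)]
    congr 1
    apply Finset.sum_congr _ (fun _ _ => rfl)
    apply Finset.filter_congr
    intro x hx
    simp only [not_not]
  -- the key inequality: card N + 1 ≤ pairing
  have hNcard : (N.card : ℝ) + 1 ≤ ⟪coroot α, (2 : ℝ) • rho Rpos⟫ := by
    rw [hpair, hsplit, hMsum, add_zero]
    have herase : ∑ β ∈ N, k β = k α + ∑ β ∈ N.erase α, k β :=
      (Finset.add_sum_erase N k hαN).symm
    have hbound : ((N.erase α).card : ℝ) ≤ ∑ β ∈ N.erase α, k β := by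
      have := Finset.card_nsmul_le_sum (N.erase α) k 1
        (fun x hx => hk1 x (Finset.mem_of_mem_erase hx))
      simpa using this
    have hcard : ((N.erase α).card : ℝ) = (N.card : ℝ) - 1 := by
      rw [Finset.card_erase_of_mem hαN]
      have : 1 ≤ N.card := Finset.card_pos.2 ⟨α, hαN⟩
      push_cast [Nat.cast_sub this]
      ring
    rw [herase, hkα]
    rw [hcard] at hbound
    linarith
  -- second claim
  have hlen_sref : lenW Rpos (sref α) = N.card := rfl
  constructor
  swap
  · rw [hlen_sref]; linarith
  -- first claim: length difference bounded by card N
  -- lenW w = |I∩N| + |I∩M|, lenW (w ∘ sref α) = |N \ I| + |I∩M| (via bijections)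
  have hlenw : ∀ u : V ≃ₗᵢ[ℝ] V,
      lenW Rpos u = (N.filter (fun β => u β ∉ Rpos)).card
        + (M.filter (fun β => u β ∉ Rpos)).card := by
    intro u
    rw [lenW, hN, hM, Finset.filter_filter, Finset.filter_filter,
      ← Finset.card_union_of_disjoint, ← Finset.filter_or]
    · congr 1
      apply Finset.filter_congr
      intro x hx
      constructor
      · intro hx2
        by_cases hsx : sref α x ∈ Rpos
        · exact Or.inr ⟨hsx, hx2⟩
        · exact Or.inl ⟨hsx, hx2⟩
      · rintro (⟨_, h2⟩ | ⟨_, h2⟩) <;> exact h2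
    · rw [Finset.disjoint_left]
      intro x h1 h2
      rw [Finset.mem_filter] at h1 h2
      exact h1.2.1 h2.2.1
  -- counting on M : bijection by sref α
  have hMcount : (M.filter (fun β => (w * sref α) β ∉ Rpos)).card
      = (M.filter (fun β => w β ∉ Rpos)).card := by
    apply Finset.card_bij' (i := fun β _ => sref α β) (j := fun β _ => sref α β)
    · intro a ha
      rw [Finset.mem_filter, hM, Finset.mem_filter] at ha ⊢
      obtain ⟨⟨h1, h2⟩, h3⟩ := ha
      exact ⟨⟨h2, by rw [sref_sref]; exact h1⟩, h3⟩
    · intro a ha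
      rw [Finset.mem_filter, hM, Finset.mem_filter] at ha ⊢
      obtain ⟨⟨h1, h2⟩, h3⟩ := ha
      refine ⟨⟨h2, by rw [sref_sref]; exact h1⟩, ?_⟩
      show w (sref α (sref α a)) ∉ Rpos
      rwa [sref_sref]
    · intro a _; exact sref_sref α a
    · intro a _; exact sref_sref α a
  -- counting on N : bijection β ↦ -sref α β between (w∘sref)-inversions in N and
  -- non-inversions of w in N
  have hNmap : ∀ β ∈ N, -sref α β ∈ N := by
    intro β hβ
    rw [hN, Finset.mem_filter] at hβ ⊢
    have hβR : β ∈ R := h.pos_subset hβ.1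
    have h1 : -sref α β ∈ Rpos := (rs_pos_iff_neg_not h (rs_sref_mem h hαR hβR)).1 hβ.2
    refine ⟨h1, ?_⟩
    have : sref α (-sref α β) = -β := by rw [map_neg, sref_sref]
    rw [this]
    exact h.not_both β hβ.1
  have hNcount : (N.filter (fun β => (w * sref α) β ∉ Rpos)).card
      = (N.filter (fun β => w β ∈ Rpos)).card := by
    have hiff : ∀ β ∈ N, ((w * sref α) β ∉ Rpos ↔ w (-sref α β) ∈ Rpos) := by
      intro β hβ
      rw [hN, Finset.mem_filter] at hβ
      have hβR : β ∈ R := h.pos_subset hβ.1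
      have hsR : sref α β ∈ R := rs_sref_mem h hαR hβR
      have hwsR : w (sref α β) ∈ R := rs_weyl_mem_root h hw _ hsR
      have : w (-sref α β) = -(w (sref α β)) := map_neg w _
      rw [this]
      show w (sref α β) ∉ Rpos ↔ -(w (sref α β)) ∈ Rpos
      exact rs_pos_iff_neg_not h hwsR
    apply Finset.card_bij' (i := fun β _ => -sref α β) (j := fun β _ => -sref α β)
    · intro a ha
      rw [Finset.mem_filter] at ha ⊢
      refine ⟨hNmap a ha.1, ?_⟩
      exact (hiff a ha.1).1 ha.2
    · intro a ha
      rw [Finset.mem_filter] at ha ⊢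
      refine ⟨hNmap a ha.1, ?_⟩
      rw [hiff _ (hNmap a ha.1)]
      have heq : -sref α (-sref α a) = a := by rw [map_neg, sref_sref, neg_neg]
      rw [heq]
      exact ha.2
    · intro a _; rw [map_neg, sref_sref, neg_neg]
    · intro a _; rw [map_neg, sref_sref, neg_neg]
  -- put together
  set b : ℕ := (N.filter (fun β => w β ∉ Rpos)).card with hb
  set b' : ℕ := (N.filter (fun β => w β ∈ Rpos)).card with hb'
  set a : ℕ := (M.filter (fun β => w β ∉ Rpos)).card with ha
  have hbb' : b + b' = N.card := by
    rw [hb, hb']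
    have : N.filter (fun β => w β ∈ Rpos) = N.filter (fun β => ¬ (w β ∉ Rpos)) := by
      apply Finset.filter_congr; intro x hx; simp
    rw [this]
    exact Finset.card_filter_add_card_filter_not (p := fun β => w β ∉ Rpos)
  have hw1 : lenW Rpos w = b + a := hlenw w
  have hw2 : lenW Rpos (w * sref α) = b' + a := by
    rw [hlenw (w * sref α), hNcount, hMcount]
  rw [hw1, hw2]
  push_cast
  rw [abs_le]
  have : (b : ℝ) + b' = N.card := by exact_mod_cast hbb'
  constructor <;> [nlinarith [Nat.cast_nonneg (α := ℝ) b, Nat.cast_nonneg (α := ℝ) b'];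
    nlinarith [Nat.cast_nonneg (α := ℝ) b, Nat.cast_nonneg (α := ℝ) b']]
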